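/- arXiv:1311.5839 — 2 statements merged into one kernel-verified Lean document; each statement's English description precedes it below -/
import Mathlib

section
/- Let G = N × T be a direct product of finite abelian groups acting trivially on ℂ*. Given functions αNN : N × N → ℂ*, αTT : T × T → ℂ*, αTN : T × N → ℂ*, the formula α(nt, n't') = αTT(t,t')·αTN(t,n')·αNN(n,n') defines a (normal) 2-cocycle on G if and only if: (1) αNN is a 2-cocycle on N; (2) αTT is a 2-cocycle on T; (3) αTN(tt', n) = αTN(t,n)·αTN(t',n) for all t,t' ∈ T, n ∈ N; and (4) αTN(t, nn') = αTN(t,n)·αTN(t,n') for all t ∈ T, n,n' ∈ N. -/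
/-- Let `G = N × T` be a direct product of finite abelian groups acting
trivially on `ℂ*`. Given (normalized) cochains `αNN`, `αTT`, `αTN`, the formula
`α(nt, n't') = αTT(t,t')·αTN(t,n')·αNN(n,n')` defines a 2-cocycle on `G` iff
(1) `αNN` is a 2-cocycle on `N`, (2) `αTT` is a 2-cocycle on `T`,
(3) `αTN(tt',n) = αTN(t,n)·αTN(t',n)` and (4) `αTN(t,nn') = αTN(t,n)·αTN(t,n')`. -/
theorem stmt2 (N T : Type*) [CommGroup N] [CommGroup T] [Fintype N] [Fintype T]
    (αNN : N → N → ℂˣ) (αTT : T → T → ℂˣ) (αTN : T → N → ℂˣ)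
    (hNN1 : ∀ n : N, αNN n 1 = 1 ∧ αNN 1 n = 1)
    (hTT1 : ∀ t : T, αTT t 1 = 1 ∧ αTT 1 t = 1)
    (hTN1 : (∀ t : T, αTN t 1 = 1) ∧ (∀ n : N, αTN 1 n = 1)) :
    (∀ x y z : N × T,
        (αTT x.2 y.2 * αTN x.2 y.1 * αNN x.1 y.1) *
          (αTT (x.2 * y.2) z.2 * αTN (x.2 * y.2) z.1 * αNN (x.1 * y.1) z.1) =
        (αTT y.2 z.2 * αTN y.2 z.1 * αNN y.1 z.1) *
          (αTT x.2 (y.2 * z.2) * αTN x.2 (y.1 * z.1) * αNN x.1 (y.1 * z.1))) ↔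
      ((∀ n n' n'' : N, αNN n n' * αNN (n * n') n'' = αNN n' n'' * αNN n (n' * n'')) ∧
       (∀ t t' t'' : T, αTT t t' * αTT (t * t') t'' = αTT t' t'' * αTT t (t' * t'')) ∧
       (∀ (t t' : T) (n : N), αTN (t * t') n = αTN t n * αTN t' n) ∧
       (∀ (t : T) (n n' : N), αTN t (n * n') = αTN t n * αTN t n')) := by
  constructor
  · intro h
    refine ⟨fun n n' n'' => ?_, fun t t' t'' => ?_, fun t t' n => ?_, fun t n n' => ?_⟩
    · have := h (n, 1) (n', 1) (n'', 1)
      simpa [hTT1, hTN1.1, hTN1.2, (hTT1 1).1] using this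
    · have := h (1, t) (1, t') (1, t'')
      simpa [hNN1, hTN1.1, hTN1.2, (hNN1 1).1] using this
    · have := h (1, t) (1, t') (n, 1)
      simp [hNN1, hTT1, hTN1.1, hTN1.2, (hNN1 1).1, (hTT1 1).1] at this
      exact mul_left_cancel (a := αTT t t') (this.trans (by ac_rfl))
    · have := h (1, t) (n, 1) (n', 1)
      simp [hNN1, hTT1, hTN1.1, hTN1.2, (hNN1 1).1, (hTT1 1).1] at this
      refine mul_left_cancel (a := αNN n n') ?_
      rw [← this]; ac_rfl
  · rintro ⟨h1, h2, h3, h4⟩ x y z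
    rw [h3, h4]
    have e1 := h1 x.1 y.1 z.1
    have e2 := h2 x.2 y.2 z.2
    calc (αTT x.2 y.2 * αTN x.2 y.1 * αNN x.1 y.1) *
          (αTT (x.2 * y.2) z.2 * (αTN x.2 z.1 * αTN y.2 z.1) * αNN (x.1 * y.1) z.1)
        = (αTT x.2 y.2 * αTT (x.2 * y.2) z.2) * (αNN x.1 y.1 * αNN (x.1 * y.1) z.1) *
          (αTN x.2 y.1 * αTN x.2 z.1 * αTN y.2 z.1) := by ac_rfl
      _ = (αTT y.2 z.2 * αTT x.2 (y.2 * z.2)) * (αNN y.1 z.1 * αNN x.1 (y.1 * z.1)) *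
          (αTN x.2 y.1 * αTN x.2 z.1 * αTN y.2 z.1) := by rw [e1, e2]
      _ = (αTT y.2 z.2 * αTN y.2 z.1 * αNN y.1 z.1) *
          (αTT x.2 (y.2 * z.2) * (αTN x.2 y.1 * αTN x.2 z.1) * αNN x.1 (y.1 * z.1)) := by ac_rfl
end

section
/- Let D be a smooth projective curve of genus 5 and F₁, F₂, F₃ effective divisors of degree 4 on D, pairwise not linearly equivalent, with 2F₁ ∼ 2F₂ ∼ 2F₃, and such that every effective divisor in the linear equivalence class of F₁ + F₂ − F₃ would have to be linearly equivalent to one of F₁, F₂, F₃ (as holds when they are the only classes of G-invariant effective degree-4 divisors and the divisor class F₁+F₂−F₃ is G-invariant). Then h⁰(D, O_D(F₁+F₂−F₃)) = 0 and h¹(D, O_D(F₁+F₂−F₃)) = 0, while h⁰(D, O_D(−F₁−F₂+F₃)) = 0 and h¹(D, O_D(−F₁−F₂+F₃)) = 8. -/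
/-- let `D` be a smooth projective curve of genus `5`, modelled by its
Picard group (additively) with degree homomorphism, dimensions `h⁰, h¹` satisfying
Riemann–Roch `h⁰(L) − h¹(L) = deg L + 1 − g`, and vanishing of `h⁰` in negative
degree. Let `F₁, F₂, F₃` be (classes of) effective divisors of degree `4`, pairwise
not linearly equivalent, with `2F₁ ∼ 2F₂ ∼ 2F₃`, and such that any effective divisor
in the class of `F₁+F₂−F₃` is linearly equivalent to one of `F₁, F₂, F₃`. Then
`h⁰(O(F₁+F₂−F₃)) = 0`, `h¹(O(F₁+F₂−F₃)) = 0`, `h⁰(O(−F₁−F₂+F₃)) = 0` and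
`h¹(O(−F₁−F₂+F₃)) = 8`. -/
theorem stmt15 (Pic : Type*) [AddCommGroup Pic]
    (deg : Pic →+ ℤ) (h0 h1 : Pic → ℕ) (genus : ℕ) (hgenus : genus = 5)
    (riemannRoch : ∀ L : Pic, (h0 L : ℤ) - (h1 L : ℤ) = deg L + 1 - (genus : ℤ))
    (hnegdeg : ∀ L : Pic, deg L < 0 → h0 L = 0)
    (F1 F2 F3 : Pic)
    (hd1 : deg F1 = 4) (hd2 : deg F2 = 4) (hd3 : deg F3 = 4)
    (hne12 : F1 ≠ F2) (hne13 : F1 ≠ F3) (hne23 : F2 ≠ F3)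
    (h2eq12 : 2 • F1 = 2 • F2) (h2eq23 : 2 • F2 = 2 • F3)
    (heff : h0 (F1 + F2 - F3) ≠ 0 →
      F1 + F2 - F3 = F1 ∨ F1 + F2 - F3 = F2 ∨ F1 + F2 - F3 = F3) :
    h0 (F1 + F2 - F3) = 0 ∧ h1 (F1 + F2 - F3) = 0 ∧
    h0 (-F1 - F2 + F3) = 0 ∧ h1 (-F1 - F2 + F3) = 8 := by
  have hA : h0 (F1 + F2 - F3) = 0 := by
    by_contra h
    rcases heff h with he | he | he
    · apply hne23
      have : F2 - F3 = 0 := by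
        have h' : F2 - F3 = (F1 + F2 - F3) - F1 := by abel
        rw [h', he, sub_self]
      rw [sub_eq_zero] at this; exact this
    · apply hne13
      have : F1 - F3 = 0 := by
        have h' : F1 - F3 = (F1 + F2 - F3) - F2 := by abel
        rw [h', he, sub_self]
      rw [sub_eq_zero] at this; exact this
    · apply hne12
      have h2 : F1 + F2 = F3 + F3 := by
        have h' : F1 + F2 = (F1 + F2 - F3) + F3 := by abel
        rw [h', he]
      have h3 : F2 + F2 = F3 + F3 := by simpa [two_smul] using h2eq23
      have : F1 + F2 = F2 + F2 := by rw [h2, ← h3]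
      exact add_right_cancel this
  have hdA : deg (F1 + F2 - F3) = 4 := by
    simp [map_add, map_sub, hd1, hd2, hd3]
  have hdB : deg (-F1 - F2 + F3) = -4 := by
    simp [map_add, map_sub, map_neg, hd1, hd2, hd3]
  have hB : h0 (-F1 - F2 + F3) = 0 := hnegdeg _ (by rw [hdB]; norm_num)
  have rrA := riemannRoch (F1 + F2 - F3)
  have rrB := riemannRoch (-F1 - F2 + F3)
  rw [hA, hdA, hgenus] at rrA
  rw [hB, hdB, hgenus] at rrB
  refine ⟨hA, ?_, hB, ?_⟩ <;> omega
end
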